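/- Let (A, ≺, ≻, α, β) be a BiHom-pre-alternative algebra and α̃, β̃: A → A two BiHom-pre-alternative algebra morphisms such that any two of α, β, α̃, β̃ commute. Define x ≺' y = α̃(x) ≺ β̃(y) and x ≻' y = α̃(x) ≻ β̃(y). Then (A, ≺', ≻', α∘α̃, β∘β̃) is a BiHom-pre-alternative algebra. -/
import Mathlib


variable {K : Type*} [Field K] {A : Type*} [AddCommGroup A] [Module K A]
  {V : Type*} [AddCommGroup V] [Module K V]

/-- The right BiHom-associator of a pair of bilinear operations `p = ≺`, `s = ≻`. -/
def preAsR (p s : A →ₗ[K] A →ₗ[K] A) (α β : A →ₗ[K] A) (x y z : A) : A :=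
  p (p x y) (β z) - p (α x) (p y z + s y z)

/-- The middle BiHom-associator. -/
def preAsM (p s : A →ₗ[K] A →ₗ[K] A) (α β : A →ₗ[K] A) (x y z : A) : A :=
  p (s x y) (β z) - s (α x) (p y z)

/-- The left BiHom-associator. -/
def preAsL (p s : A →ₗ[K] A →ₗ[K] A) (α β : A →ₗ[K] A) (x y z : A) : A :=
  s (p x y + s x y) (β z) - s (α x) (s y z)

/-- A BiHom-pre-alternative algebra structure on `A`, with `p = ≺` and `s = ≻`. -/
structure IsBiHomPreAlternative (p s : A →ₗ[K] A →ₗ[K] A) (α β : A →ₗ[K] A) : Prop where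
  hαβ : ∀ x, α (β x) = β (α x)
  hαp : ∀ x y, α (p x y) = p (α x) (α y)
  hαs : ∀ x y, α (s x y) = s (α x) (α y)
  hβp : ∀ x y, β (p x y) = p (β x) (β y)
  hβs : ∀ x y, β (s x y) = s (β x) (β y)
  hr : ∀ x y z, preAsR p s α β x (β y) (α z) + preAsR p s α β x (β z) (α y) = 0
  hl : ∀ x y z, preAsL p s α β (β x) (α y) z + preAsL p s α β (β y) (α x) z = 0
  hmr : ∀ x y z, preAsM p s α β (β x) (α y) z + preAsR p s α β (β y) (α x) z = 0
  hml : ∀ x y z, preAsM p s α β x (β y) (α z) + preAsL p s α β x (β z) (α y) = 0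

/-- Twisting a BiHom-pre-alternative algebra by two of its morphisms
`α', β'` (any two of `α, β, α', β'` commuting) yields a BiHom-pre-alternative algebra with
structure maps `α ∘ α'` and `β ∘ β'`. -/
theorem yauTwist_biHomPreAlternative
    (p s : A →ₗ[K] A →ₗ[K] A) (α β α' β' : A →ₗ[K] A)
    (hpre : IsBiHomPreAlternative p s α β)
    (hα'p : ∀ x y, α' (p x y) = p (α' x) (α' y))
    (hα's : ∀ x y, α' (s x y) = s (α' x) (α' y))
    (hβ'p : ∀ x y, β' (p x y) = p (β' x) (β' y))
    (hβ's : ∀ x y, β' (s x y) = s (β' x) (β' y))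
    (hα'β' : ∀ x, α' (β' x) = β' (α' x))
    (hαα' : ∀ x, α (α' x) = α' (α x))
    (hαβ' : ∀ x, α (β' x) = β' (α x))
    (hβα' : ∀ x, β (α' x) = α' (β x))
    (hββ' : ∀ x, β (β' x) = β' (β x)) :
    IsBiHomPreAlternative ((p.comp α').compl₂ β') ((s.comp α').compl₂ β')
      (α.comp α') (β.comp β') := by

  obtain ⟨hαβ, hαp, hαs, hβp, hβs, hr, hl, hmr, hml⟩ := hpre
  constructor
  · intro x
    simp [hαβ, hα'β', hαα', hαβ', hβα', hββ']
  · intro x y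
    simp [hαp, hα'p, hαβ, hα'β', hαα', hαβ', hβα', hββ']
  · intro x y
    simp [hαs, hα's, hαβ, hα'β', hαα', hαβ', hβα', hββ']
  · intro x y
    simp [hβp, hβ'p, hαβ, hα'β', hαα', hαβ', hβα', hββ']
  · intro x y
    simp [hβs, hβ's, hαβ, hα'β', hαα', hαβ', hβα', hββ']
  · intro x y z
    have h := hr (α' (α' x)) (α' (β' (β' y))) (α' (β' (β' z)))
    simp only [preAsR, preAsM, preAsL, LinearMap.comp_apply, LinearMap.compl₂_apply,
      LinearMap.add_apply, map_add, map_sub, hαp, hαs, hβp, hβs, hα'p, hα's, hβ'p, hβ's,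
      hαβ, hα'β', hαα', hαβ', hβα', hββ'] at h ⊢
    exact h
  · intro x y z
    have h := hl (α' (α' (β' x))) (α' (α' (β' y))) (β' (β' z))
    simp only [preAsR, preAsM, preAsL, LinearMap.comp_apply, LinearMap.compl₂_apply,
      LinearMap.add_apply, map_add, map_sub, hαp, hαs, hβp, hβs, hα'p, hα's, hβ'p, hβ's,
      hαβ, hα'β', hαα', hαβ', hβα', hββ'] at h ⊢
    exact h
  · intro x y z
    have h := hmr (α' (α' (β' x))) (α' (α' (β' y))) (β' (β' z))
    simp only [preAsR, preAsM, preAsL, LinearMap.comp_apply, LinearMap.compl₂_apply,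
      LinearMap.add_apply, map_add, map_sub, hαp, hαs, hβp, hβs, hα'p, hα's, hβ'p, hβ's,
      hαβ, hα'β', hαα', hαβ', hβα', hββ'] at h ⊢
    exact h
  · intro x y z
    have h := hml (α' (α' x)) (α' (β' (β' y))) (α' (β' (β' z)))
    simp only [preAsR, preAsM, preAsL, LinearMap.comp_apply, LinearMap.compl₂_apply,
      LinearMap.add_apply, map_add, map_sub, hαp, hαs, hβp, hβs, hα'p, hα's, hβ'p, hβ's,
      hαβ, hα'β', hαα', hαβ', hβα', hββ'] at h ⊢
    exact h
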